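/- Let L_1 and L_2 be layers on n channels with L_1 maximal, and let π be a permutation of {1,…,n} such that π(L_1) = L_1 and π(L_2) is a layer (i.e., π(i) < π(j) for every (i,j) ∈ L_2). Then there is a sorting network of depth d of the form L_1;L_2;C for some comparator network C if and only if there is a sorting network of depth d of the form L_1;π(L_2);C' for some comparator network C'. -/

import Mathlib

namespace SN

open scoped Classical

/-- A comparator on `n` channels: a pair of channels. -/
abbrev Comp (n : ℕ) := Fin n × Fin n

/-- A layer is a finite set of comparators. -/
abbrev Layer (n : ℕ) := Finset (Comp n)

/-- A comparator network is a sequence (list) of layers; its depth is the length. -/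
abbrev Net (n : ℕ) := List (Layer n)

/-- Each channel is used by at most one comparator of the layer. -/
def NoOverlap {n : ℕ} (L : Layer n) : Prop :=
  ∀ c ∈ L, ∀ c' ∈ L, c ≠ c' →
    c.1 ≠ c'.1 ∧ c.1 ≠ c'.2 ∧ c.2 ≠ c'.1 ∧ c.2 ≠ c'.2

/-- A (standard) layer: comparators `(i,j)` with `i < j`, channels pairwise disjoint. -/
def IsLayer {n : ℕ} (L : Layer n) : Prop :=
  (∀ c ∈ L, c.1 < c.2) ∧ NoOverlap L

/-- A generalized layer: comparators `(i,j)` with `i ≠ j` allowed in any order. -/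
def IsGenLayer {n : ℕ} (L : Layer n) : Prop :=
  (∀ c ∈ L, c.1 ≠ c.2) ∧ NoOverlap L

def IsNet {n : ℕ} (C : Net n) : Prop := ∀ L ∈ C, IsLayer L

def IsGenNet {n : ℕ} (C : Net n) : Prop := ∀ L ∈ C, IsGenLayer L

/-- Apply one layer to a Boolean vector: a comparator `(i,j)` puts the min
(`&&`) on channel `i` and the max (`||`) on channel `j`. -/
noncomputable def applyLayer {n : ℕ} (L : Layer n) (x : Fin n → Bool) : Fin n → Bool :=
  fun k =>
    if h1 : ∃ c ∈ L, c.1 = k then x h1.choose.1 && x h1.choose.2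
    else if h2 : ∃ c ∈ L, c.2 = k then x h2.choose.1 || x h2.choose.2
    else x k

/-- Run a comparator network on a Boolean input (layers applied in sequence). -/
noncomputable def run {n : ℕ} (C : Net n) (x : Fin n → Bool) : Fin n → Bool :=
  C.foldl (fun y L => applyLayer L y) x

/-- Ascendingly sorted Boolean vector. -/
def BSorted {n : ℕ} (x : Fin n → Bool) : Prop :=
  ∀ i j : Fin n, i ≤ j → x i ≤ x j

/-- A sorting network: a comparator network sorting every Boolean input. -/
def IsSortingNet {n : ℕ} (C : Net n) : Prop :=
  IsNet C ∧ ∀ x : Fin n → Bool, BSorted (run C x)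

/-- The set of outputs of a network on all Boolean inputs. -/
def outputs {n : ℕ} (C : Net n) : Set (Fin n → Bool) := Set.range (run C)

/-- Apply one layer to a vector of naturals. -/
noncomputable def applyLayerN {n : ℕ} (L : Layer n) (x : Fin n → ℕ) : Fin n → ℕ :=
  fun k =>
    if h1 : ∃ c ∈ L, c.1 = k then min (x h1.choose.1) (x h1.choose.2)
    else if h2 : ∃ c ∈ L, c.2 = k then max (x h2.choose.1) (x h2.choose.2)
    else x k

noncomputable def runN {n : ℕ} (C : Net n) (x : Fin n → ℕ) : Fin n → ℕ :=
  C.foldl (fun y L => applyLayerN L y) x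

def NSorted {n : ℕ} (x : Fin n → ℕ) : Prop :=
  ∀ i j : Fin n, i ≤ j → x i ≤ x j

/-- Permute the coordinates of a Boolean vector by `π` (channel `k`'s value
moves to channel `π k`). -/
def permVec {n : ℕ} (π : Equiv.Perm (Fin n)) (x : Fin n → Bool) : Fin n → Bool :=
  fun i => x (π.symm i)

/-- The image of a set of Boolean vectors under coordinate permutation by `π`. -/
def permSet {n : ℕ} (π : Equiv.Perm (Fin n)) (X : Set (Fin n → Bool)) :
    Set (Fin n → Bool) :=
  permVec π '' X

/-- The image `π(L)` of a layer under a permutation of channels. -/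
def permLayer {n : ℕ} (π : Equiv.Perm (Fin n)) (L : Layer n) : Layer n :=
  L.image fun c => (π c.1, π c.2)

/-- Channel `i` is used by some comparator of the layer `L`. -/
def usedIn {n : ℕ} (L : Layer n) (i : Fin n) : Prop := ∃ c ∈ L, c.1 = i ∨ c.2 = i

/-- Channels `i` and `j` are joined by a comparator of `L`. -/
def Joined {n : ℕ} (L : Layer n) (i j : Fin n) : Prop := (i, j) ∈ L ∨ (j, i) ∈ L

/-- `i` is the smaller channel of some comparator of `L` (a min-channel). -/
def MinChan {n : ℕ} (L : Layer n) (i : Fin n) : Prop := ∃ c ∈ L, c.1 = i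

/-- `i` is the larger channel of some comparator of `L` (a max-channel). -/
def MaxChan {n : ℕ} (L : Layer n) (i : Fin n) : Prop := ∃ c ∈ L, c.2 = i

/-- A two-layer network `[L1, L2]` is redundant if some comparator can be removed
so that the outputs of the result are a permutation of the original outputs. -/
def Redundant {n : ℕ} (L1 L2 : Layer n) : Prop :=
  ∃ π : Equiv.Perm (Fin n),
    (∃ c ∈ L1, outputs [L1.erase c, L2] = permSet π (outputs [L1, L2])) ∨
    (∃ c ∈ L2, outputs [L1, L2.erase c] = permSet π (outputs [L1, L2]))

/-- A two-layer network `[L1, L2]` is saturated if it is non-redundant and no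
comparator on two channels unused in the second layer can be added to the second
layer so as to make the output set a proper subset of a permutation of the
original output set. -/
def Saturated {n : ℕ} (L1 L2 : Layer n) : Prop :=
  ¬ Redundant L1 L2 ∧
  ¬ ∃ (c : Comp n) (π : Equiv.Perm (Fin n)),
      c.1 < c.2 ∧ ¬ usedIn L2 c.1 ∧ ¬ usedIn L2 c.2 ∧
      outputs [L1, insert c L2] ⊂ permSet π (outputs [L1, L2])

/-- Vertices of the graph representation of `C`: the comparators of `C`,
tagged with the index of the layer containing them. -/
def Vertex {n : ℕ} (C : Net n) := {p : ℕ × Comp n // p.2 ∈ C.getD p.1 ∅}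

/-- The channel carrying the min output (`b = false`, label 1) or max output
(`b = true`, label 2) of a comparator. -/
def outChan {n : ℕ} (c : Comp n) (b : Bool) : Fin n := if b then c.2 else c.1

/-- An edge with label `b` (1 for min, 2 for max) from comparator `u` to
comparator `v`: the corresponding output of `u` is an input of `v`, i.e. `v`
is the next comparator on that channel. -/
def Edge {n : ℕ} (C : Net n) (b : Bool) (u v : ℕ × Comp n) : Prop :=
  u.1 < v.1 ∧ (outChan u.2 b = v.2.1 ∨ outChan u.2 b = v.2.2) ∧
  ∀ m, u.1 < m → m < v.1 → ¬ usedIn (C.getD m ∅) (outChan u.2 b)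

/-- The graph representations of `C` and `D` are isomorphic: a bijection of
comparators preserving the labeled edges. -/
def GraphIso {n m : ℕ} (C : Net n) (D : Net m) : Prop :=
  ∃ f : Vertex C ≃ Vertex D,
    ∀ (b : Bool) (u v : Vertex C),
      Edge C b u.val v.val ↔ Edge D b (f u).val (f v).val

/-- The graph representation of `C` is connected. -/
def GraphConnected {n : ℕ} (C : Net n) : Prop :=
  ∀ u v : Vertex C,
    Relation.ReflTransGen
      (fun a b : Vertex C => ∃ ℓ : Bool, Edge C ℓ a.val b.val ∨ Edge C ℓ b.val a.val) u v

/-- Reflection of a comparator: `(i,j) ↦ (n-j+1, n-i+1)` (in 1-based terms). -/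
def reflectComp {n : ℕ} (c : Comp n) : Comp n := (c.2.rev, c.1.rev)

def reflectLayer {n : ℕ} (L : Layer n) : Layer n := L.image reflectComp

/-- Reflection `C^R` of a comparator network. -/
def reflect {n : ℕ} (C : Net n) : Net n := C.map reflectLayer

/-- The first layer `F_n = {(2i-1, 2i) : 1 ≤ i ≤ ⌊n/2⌋}` (0-indexed: `(2i, 2i+1)`). -/
def FLayer (n : ℕ) : Layer n :=
  Finset.univ.filter fun c : Comp n => c.1.val % 2 = 0 ∧ c.2.val = c.1.val + 1

/-- The two-layer networks with first layer `F_n`, parametrized by second layer. -/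
def SecondLayers (n : ℕ) := {L : Layer n // IsLayer L}

/-- The number `|R(G_n)|` of equivalence classes of two-layer networks with
first layer `F_n`, under graph isomorphism `≈`. -/
noncomputable def numClasses (n : ℕ) : ℕ :=
  Nat.card (Quot fun L L' : SecondLayers n =>
    GraphIso ([FLayer n, L.val] : Net n) ([FLayer n, L'.val] : Net n))

/-- Redundant two-layer networks with first layer `F_n`. -/
def RedLayers (n : ℕ) := {L : Layer n // IsLayer L ∧ Redundant (FLayer n) L}

/-- The number of equivalence classes of redundant two-layer networks with
first layer `F_n`, under graph isomorphism `≈`. -/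
noncomputable def numRedClasses (n : ℕ) : ℕ :=
  Nat.card (Quot fun L L' : RedLayers n =>
    GraphIso ([FLayer n, L.val] : Net n) ([FLayer n, L'.val] : Net n))

/-!
Conjugating `L1;L2;C` by `π` gives `L1;π(L2);π(C)`, whose output on `x` is the `π`-image of
the sorted output of `L1;L2;C` on `π⁻¹ x`. The comparators of `π(C)` may point downwards;
untangling them layer by layer (Knuth, Exercise 5.3.4-16) gives a standard network `T` of the same
depth whose outputs are those of `π(C)` up to one fixed permutation of the channels. Hence
`L1;π(L2);T` outputs a fixed permutation `μ` of sorted vectors. A standard network fixes sorted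
inputs and a sorted `0-1` vector is determined by its number of ones, so `μ` fixes every sorted
vector and `L1;π(L2);T` sorts. The converse is the same argument for `π⁻¹`.
-/

section Layers

variable {n : ℕ}

lemma NoOverlap.eq_of_shared_channel {L : Layer n} (hL : NoOverlap L) {c c' : Comp n}
    {k : Fin n} (hc : c ∈ L) (hc' : c' ∈ L) (h : c.1 = k ∨ c.2 = k) (h' : c'.1 = k ∨ c'.2 = k) :
    c = c' := by
  by_contra hne
  obtain ⟨h11, h12, h21, h22⟩ := hL c hc c' hc' hne
  rcases h with rfl | rfl <;> rcases h' with h' | h' <;> simp_all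

lemma IsGenLayer.fst_ne_snd {L : Layer n} (hL : IsGenLayer L) {c c' : Comp n}
    (hc : c ∈ L) (hc' : c' ∈ L) : c'.1 ≠ c.2 := by
  rcases eq_or_ne c c' with rfl | hne
  · exact hL.1 c hc
  · exact fun h => (hL.2 c hc c' hc' hne).2.2.1 h.symm

lemma IsLayer.isGenLayer {L : Layer n} (h : IsLayer L) : IsGenLayer L :=
  ⟨fun c hc => (h.1 c hc).ne, h.2⟩

lemma run_cons (L : Layer n) (C : Net n) (x : Fin n → Bool) :
    run (L :: C) x = run C (applyLayer L x) := rfl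

lemma applyLayer_fst {L : Layer n} (hL : IsGenLayer L) {c : Comp n} (hc : c ∈ L)
    (x : Fin n → Bool) : applyLayer L x c.1 = (x c.1 && x c.2) := by
  have h : ∃ c' ∈ L, c'.1 = c.1 := ⟨c, hc, rfl⟩
  have hc' : h.choose = c :=
    hL.2.eq_of_shared_channel h.choose_spec.1 hc (Or.inl h.choose_spec.2) (Or.inl rfl)
  rw [applyLayer, dif_pos h, hc']

lemma applyLayer_snd {L : Layer n} (hL : IsGenLayer L) {c : Comp n} (hc : c ∈ L)
    (x : Fin n → Bool) : applyLayer L x c.2 = (x c.1 || x c.2) := by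
  have hfst : ¬ ∃ c' ∈ L, c'.1 = c.2 := fun ⟨c', hc', h⟩ => hL.fst_ne_snd hc hc' h
  have h : ∃ c' ∈ L, c'.2 = c.2 := ⟨c, hc, rfl⟩
  have hc' : h.choose = c :=
    hL.2.eq_of_shared_channel h.choose_spec.1 hc (Or.inr h.choose_spec.2) (Or.inr rfl)
  rw [applyLayer, dif_neg hfst, dif_pos h, hc']

lemma applyLayer_of_not_usedIn {L : Layer n} {k : Fin n} (h : ¬ usedIn L k)
    (x : Fin n → Bool) : applyLayer L x k = x k := by
  have hfst : ¬ ∃ c ∈ L, c.1 = k := fun ⟨c, hc, hk⟩ => h ⟨c, hc, Or.inl hk⟩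
  have hsnd : ¬ ∃ c ∈ L, c.2 = k := fun ⟨c, hc, hk⟩ => h ⟨c, hc, Or.inr hk⟩
  rw [applyLayer, dif_neg hfst, dif_neg hsnd]

@[simp]
lemma permVec_apply (π : Equiv.Perm (Fin n)) (x : Fin n → Bool) (k : Fin n) :
    permVec π x (π k) = x k := by
  simp [permVec]

@[simp]
lemma permVec_symm_permVec (π : Equiv.Perm (Fin n)) (x : Fin n → Bool) :
    permVec π.symm (permVec π x) = x := by
  funext i
  simp [permVec]

@[simp]
lemma permVec_permVec_symm (π : Equiv.Perm (Fin n)) (x : Fin n → Bool) :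
    permVec π (permVec π.symm x) = x := by
  funext i
  simp [permVec]

lemma permVec_mul (π τ : Equiv.Perm (Fin n)) (x : Fin n → Bool) :
    permVec (π * τ) x = permVec π (permVec τ x) := by
  funext i
  simp [permVec, Equiv.Perm.mul_def]

lemma mem_permLayer {π : Equiv.Perm (Fin n)} {L : Layer n} {c : Comp n} :
    c ∈ permLayer π L ↔ ∃ a ∈ L, (π a.1, π a.2) = c := by
  simp [permLayer]

lemma NoOverlap.permLayer {L : Layer n} (h : NoOverlap L) (π : Equiv.Perm (Fin n)) :
    NoOverlap (permLayer π L) := by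
  rintro _ hc _ hc' hne
  obtain ⟨a, ha, rfl⟩ := mem_permLayer.mp hc
  obtain ⟨b, hb, rfl⟩ := mem_permLayer.mp hc'
  obtain ⟨h11, h12, h21, h22⟩ := h a ha b hb (by rintro rfl; exact hne rfl)
  simp only [ne_eq, EmbeddingLike.apply_eq_iff_eq]
  exact ⟨h11, h12, h21, h22⟩

lemma IsGenLayer.permLayer {L : Layer n} (h : IsGenLayer L) (π : Equiv.Perm (Fin n)) :
    IsGenLayer (permLayer π L) := by
  refine ⟨?_, h.2.permLayer π⟩
  intro c hc
  obtain ⟨a, ha, rfl⟩ := mem_permLayer.mp hc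
  exact π.injective.ne (h.1 a ha)

lemma IsLayer.permLayer {L : Layer n} (h : IsLayer L) {π : Equiv.Perm (Fin n)}
    (hπ : ∀ c ∈ L, π c.1 < π c.2) : IsLayer (permLayer π L) := by
  refine ⟨?_, h.2.permLayer π⟩
  intro c hc
  obtain ⟨a, ha, rfl⟩ := mem_permLayer.mp hc
  exact hπ a ha

@[simp]
lemma permLayer_symm_permLayer (π : Equiv.Perm (Fin n)) (L : Layer n) :
    permLayer π.symm (permLayer π L) = L := by
  simp [permLayer, Finset.image_image, Function.comp_def]

lemma permLayer_symm_of_permLayer_eq {π : Equiv.Perm (Fin n)} {L : Layer n}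
    (h : permLayer π L = L) : permLayer π.symm L = L := by
  conv_lhs => rw [← h]
  exact permLayer_symm_permLayer π L

lemma usedIn_permLayer_apply {π : Equiv.Perm (Fin n)} {L : Layer n} {k : Fin n} :
    usedIn (permLayer π L) (π k) ↔ usedIn L k := by
  simp [usedIn, permLayer]

lemma applyLayer_permLayer {L : Layer n} (hL : IsGenLayer L) (π : Equiv.Perm (Fin n))
    (x : Fin n → Bool) :
    applyLayer (permLayer π L) x = permVec π (applyLayer L (permVec π.symm x)) := by
  have hπL := hL.permLayer π
  funext k
  obtain ⟨k, rfl⟩ := π.surjective k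
  rw [permVec_apply]
  by_cases hk : usedIn L k
  · obtain ⟨c, hc, rfl | rfl⟩ := hk
    · rw [applyLayer_fst hL hc]
      exact (applyLayer_fst hπL (mem_permLayer.mpr ⟨c, hc, rfl⟩) x).trans (by simp [permVec])
    · rw [applyLayer_snd hL hc]
      exact (applyLayer_snd hπL (mem_permLayer.mpr ⟨c, hc, rfl⟩) x).trans (by simp [permVec])
  · rw [applyLayer_of_not_usedIn (usedIn_permLayer_apply.not.mpr hk),
      applyLayer_of_not_usedIn hk]
    simp [permVec]

end Layers

section Untangle

variable {n : ℕ}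

def orientComp (c : Comp n) : Comp n := if c.2 < c.1 then (c.2, c.1) else c

def orientLayer (L : Layer n) : Layer n := L.image orientComp

lemma IsGenLayer.isLayer_orientLayer {L : Layer n} (hL : IsGenLayer L) :
    IsLayer (orientLayer L) := by
  constructor
  · intro d hd
    obtain ⟨c, hc, rfl⟩ := Finset.mem_image.mp hd
    unfold orientComp
    split_ifs with h
    · exact h
    · exact lt_of_le_of_ne (not_lt.mp h) (hL.1 c hc)
  · intro d hd d' hd' hne
    obtain ⟨a, ha, rfl⟩ := Finset.mem_image.mp hd
    obtain ⟨b, hb, rfl⟩ := Finset.mem_image.mp hd'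
    obtain ⟨h11, h12, h21, h22⟩ := hL.2 a ha b hb (by rintro rfl; exact hne rfl)
    unfold orientComp
    split_ifs
    · exact ⟨h22, h21, h12, h11⟩
    · exact ⟨h21, h22, h11, h12⟩
    · exact ⟨h12, h11, h22, h21⟩
    · exact ⟨h11, h12, h21, h22⟩

lemma usedIn_of_usedIn_orientLayer {L : Layer n} {k : Fin n} (h : usedIn (orientLayer L) k) :
    usedIn L k := by
  obtain ⟨d, hd, hk⟩ := h
  obtain ⟨c, hc, rfl⟩ := Finset.mem_image.mp hd
  refine ⟨c, hc, ?_⟩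
  unfold orientComp at hk
  split_ifs at hk <;> tauto

lemma applyLayer_orientLayer {L : Layer n} (hL : IsGenLayer L) {c : Comp n} (hc : c ∈ L)
    (x : Fin n → Bool) :
    applyLayer (orientLayer L) x (orientComp c).1 = (x c.1 && x c.2) ∧
      applyLayer (orientLayer L) x (orientComp c).2 = (x c.1 || x c.2) := by
  have hO := hL.isLayer_orientLayer.isGenLayer
  have hmem : orientComp c ∈ orientLayer L := Finset.mem_image_of_mem _ hc
  rw [applyLayer_fst hO hmem, applyLayer_snd hO hmem]
  unfold orientComp
  split_ifs <;> simp [Bool.and_comm, Bool.or_comm]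

/-- Exchanges the two channels of every comparator `(i, j)` of `L` with `j < i`. -/
noncomputable def swapReversed (L : Layer n) (k : Fin n) : Fin n :=
  if h : ∃ c ∈ L, c.2 < c.1 ∧ (c.1 = k ∨ c.2 = k) then
    if h.choose.1 = k then h.choose.2 else h.choose.1
  else k

lemma swapReversed_of_mem {L : Layer n} (hL : NoOverlap L) {c : Comp n} (hc : c ∈ L) :
    swapReversed L c.1 = (orientComp c).1 ∧ swapReversed L c.2 = (orientComp c).2 := by
  by_cases hrev : c.2 < c.1
  · have choose_eq {k : Fin n} (h : ∃ c' ∈ L, c'.2 < c'.1 ∧ (c'.1 = k ∨ c'.2 = k))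
        (hk : c.1 = k ∨ c.2 = k) : h.choose = c :=
      hL.eq_of_shared_channel h.choose_spec.1 hc h.choose_spec.2.2 hk
    have h1 : ∃ c' ∈ L, c'.2 < c'.1 ∧ (c'.1 = c.1 ∨ c'.2 = c.1) := ⟨c, hc, hrev, Or.inl rfl⟩
    have h2 : ∃ c' ∈ L, c'.2 < c'.1 ∧ (c'.1 = c.2 ∨ c'.2 = c.2) := ⟨c, hc, hrev, Or.inr rfl⟩
    simp only [swapReversed, dif_pos h1, dif_pos h2, choose_eq h1 (Or.inl rfl),
      choose_eq h2 (Or.inr rfl), orientComp, if_pos hrev, if_true, if_neg hrev.ne', and_self]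
  · have hnone {k : Fin n} (hk : c.1 = k ∨ c.2 = k) :
        ¬ ∃ c' ∈ L, c'.2 < c'.1 ∧ (c'.1 = k ∨ c'.2 = k) := by
      rintro ⟨c', hc', hrev', hk'⟩
      obtain rfl := hL.eq_of_shared_channel hc' hc hk' hk
      exact hrev hrev'
    simp only [swapReversed, dif_neg (hnone (Or.inl rfl)), dif_neg (hnone (Or.inr rfl)),
      orientComp, if_neg hrev, and_self]

lemma swapReversed_of_not_usedIn {L : Layer n} {k : Fin n} (h : ¬ usedIn L k) :
    swapReversed L k = k :=
  dif_neg fun ⟨c, hc, _, hk⟩ => h ⟨c, hc, hk⟩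

lemma swapReversed_involutive {L : Layer n} (hL : NoOverlap L) :
    Function.Involutive (swapReversed L) := by
  intro k
  by_cases hk : usedIn L k
  · obtain ⟨c, hc, rfl | rfl⟩ := hk <;>
    · obtain ⟨h1, h2⟩ := swapReversed_of_mem hL hc
      unfold orientComp at h1 h2
      split_ifs at h1 h2 <;> simp [h1, h2]
  · rw [swapReversed_of_not_usedIn hk, swapReversed_of_not_usedIn hk]

lemma IsGenLayer.exists_applyLayer_eq_permVec {L : Layer n} (hL : IsGenLayer L) :
    ∃ τ : Equiv.Perm (Fin n), ∀ x, applyLayer L x = permVec τ (applyLayer (orientLayer L) x) := by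
  refine ⟨(swapReversed_involutive hL.2).toPerm, fun x => funext fun k => ?_⟩
  change applyLayer L x k = applyLayer (orientLayer L) x (swapReversed L k)
  by_cases hk : usedIn L k
  · obtain ⟨c, hc, rfl | rfl⟩ := hk
    · rw [(swapReversed_of_mem hL.2 hc).1, (applyLayer_orientLayer hL hc x).1,
        applyLayer_fst hL hc]
    · rw [(swapReversed_of_mem hL.2 hc).2, (applyLayer_orientLayer hL hc x).2,
        applyLayer_snd hL hc]
  · rw [swapReversed_of_not_usedIn hk, applyLayer_of_not_usedIn hk,
      applyLayer_of_not_usedIn (mt usedIn_of_usedIn_orientLayer hk)]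

lemma IsGenNet.exists_isNet_run_eq_permVec {C : Net n} (hC : IsGenNet C)
    (ρ : Equiv.Perm (Fin n)) :
    ∃ T : Net n, T.length = C.length ∧ IsNet T ∧
      ∃ σ : Equiv.Perm (Fin n), ∀ x, run T x = permVec σ (run C (permVec ρ x)) := by
  induction C generalizing ρ with
  | nil => exact ⟨[], rfl, by simp [IsNet], ρ.symm, fun x => by simp [run]⟩
  | cons L C ih =>
    have hL : IsGenLayer (permLayer ρ.symm L) := (hC L List.mem_cons_self).permLayer ρ.symm
    obtain ⟨τ, hτ⟩ := hL.exists_applyLayer_eq_permVec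
    obtain ⟨T, hlen, hT, σ, hσ⟩ :=
      ih (fun M hM => hC M (List.mem_cons_of_mem _ hM)) (ρ * τ)
    refine ⟨orientLayer (permLayer ρ.symm L) :: T, by simp [hlen], ?_, σ, fun x => ?_⟩
    · exact List.forall_mem_cons.mpr ⟨hL.isLayer_orientLayer, hT⟩
    · rw [run_cons, hσ, permVec_mul, ← hτ, applyLayer_permLayer (hC L List.mem_cons_self)]
      simp [run_cons]

end Untangle

section Sorted

variable {n : ℕ}

def numTrue (x : Fin n → Bool) : ℕ := ∑ i, (x i).toNat

lemma numTrue_permVec (π : Equiv.Perm (Fin n)) (x : Fin n → Bool) :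
    numTrue (permVec π x) = numTrue x :=
  Equiv.sum_comp π.symm fun i => (x i).toNat

lemma BSorted.le_of_apply {x y : Fin n → Bool} (hx : BSorted x) (hy : BSorted y) {i : Fin n}
    (hxi : x i = true) (hyi : y i = false) : y ≤ x := by
  intro j
  rcases le_total j i with hji | hij
  · calc y j ≤ y i := hy j i hji
      _ = false := hyi
      _ ≤ x j := Bool.false_le _
  · calc y j ≤ true := Bool.le_true _
      _ = x i := hxi.symm
      _ ≤ x j := hx i j hij

lemma BSorted.eq_of_numTrue_eq {x y : Fin n → Bool} (hx : BSorted x) (hy : BSorted y)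
    (h : numTrue x = numTrue y) : x = y := by
  have numTrue_lt {x y : Fin n → Bool} (hx : BSorted x) (hy : BSorted y) {i : Fin n}
      (hxi : x i = true) (hyi : y i = false) : numTrue y < numTrue x :=
    Finset.sum_lt_sum (fun j _ => Bool.toNat_le_toNat (hx.le_of_apply hy hxi hyi j))
      ⟨i, Finset.mem_univ i, by simp [hxi, hyi]⟩
  funext i
  cases hxi : x i <;> cases hyi : y i
  · rfl
  · exact absurd h (numTrue_lt hy hx hyi hxi).ne
  · exact absurd h (numTrue_lt hx hy hxi hyi).ne'
  · rfl

lemma applyLayer_of_bSorted {L : Layer n} (hL : IsLayer L) {s : Fin n → Bool}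
    (hs : BSorted s) : applyLayer L s = s := by
  funext k
  by_cases hk : usedIn L k
  · have hle {c : Comp n} (hc : c ∈ L) : s c.1 = true → s c.2 = true :=
      Bool.le_iff_imp.mp (hs _ _ (hL.1 c hc).le)
    obtain ⟨c, hc, rfl | rfl⟩ := hk
    · rw [applyLayer_fst hL.isGenLayer hc, Bool.and_eq_left_iff_imp.mpr (hle hc)]
    · rw [applyLayer_snd hL.isGenLayer hc, Bool.or_eq_right_iff_imp.mpr (hle hc)]
  · exact applyLayer_of_not_usedIn hk s

lemma IsNet.run_of_bSorted {C : Net n} (hC : IsNet C) {s : Fin n → Bool} (hs : BSorted s) :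
    run C s = s := by
  induction C with
  | nil => rfl
  | cons L C ih =>
    rw [run_cons, applyLayer_of_bSorted (hC L List.mem_cons_self) hs]
    exact ih fun M hM => hC M (List.mem_cons_of_mem _ hM)

lemma IsNet.isSortingNet_of_run_eq_permVec {S : Net n} (hS : IsNet S) (μ : Equiv.Perm (Fin n))
    (h : ∀ x, ∃ s, BSorted s ∧ run S x = permVec μ s) : IsSortingNet S := by
  have hμ {t : Fin n → Bool} (ht : BSorted t) : permVec μ t = t := by
    obtain ⟨s, hs, hts⟩ := h t
    rw [hS.run_of_bSorted ht] at hts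
    have hst : s = t := hs.eq_of_numTrue_eq ht (by rw [hts, numTrue_permVec])
    rw [← hst, ← hts, hst]
  refine ⟨hS, fun x => ?_⟩
  obtain ⟨s, hs, hxs⟩ := h x
  rwa [hxs, hμ hs]

end Sorted

lemma exists_sortingNet_permLayer {n d : ℕ} (π : Equiv.Perm (Fin n)) (L1 L2 : Layer n)
    (h1 : IsLayer L1) (h2 : IsLayer L2) (hπ1 : permLayer π L1 = L1)
    (hπ2 : ∀ c ∈ L2, π c.1 < π c.2)
    (hC : ∃ C : Net n, (L1 :: L2 :: C).length = d ∧ IsSortingNet (L1 :: L2 :: C)) :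
    ∃ C' : Net n, (L1 :: permLayer π L2 :: C').length = d ∧
      IsSortingNet (L1 :: permLayer π L2 :: C') := by
  obtain ⟨C, rfl, hN, hsort⟩ := hC
  have hCgen : IsGenNet C := fun M hM => (hN M (by simp [hM])).isGenLayer
  obtain ⟨T, hlen, hT, σ, hσ⟩ := hCgen.exists_isNet_run_eq_permVec π.symm
  refine ⟨T, by simp [hlen], ?_⟩
  have hS : IsNet (L1 :: permLayer π L2 :: T) :=
    List.forall_mem_cons.mpr ⟨h1, List.forall_mem_cons.mpr ⟨h2.permLayer hπ2, hT⟩⟩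
  refine hS.isSortingNet_of_run_eq_permVec σ fun x => ⟨_, hsort (permVec π.symm x), ?_⟩
  have hL1 : applyLayer L1 (permVec π.symm x) = permVec π.symm (applyLayer L1 x) := by
    conv_lhs => rw [← permLayer_symm_of_permLayer_eq hπ1]
    rw [applyLayer_permLayer h1.isGenLayer]
    simp
  rw [run_cons, run_cons, hσ, applyLayer_permLayer h2.isGenLayer, permVec_symm_permVec,
    run_cons, run_cons, hL1]

theorem second_layer_permutation_general {n d : ℕ} (π : Equiv.Perm (Fin n))
    (L1 L2 : Layer n) (h1 : IsLayer L1)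
    (h2 : IsLayer L2) (hπ1 : permLayer π L1 = L1)
    (hπ2 : ∀ c ∈ L2, π c.1 < π c.2) :
    (∃ C : Net n, (L1 :: L2 :: C).length = d ∧ IsSortingNet (L1 :: L2 :: C)) ↔
    (∃ C' : Net n, (L1 :: permLayer π L2 :: C').length = d ∧
      IsSortingNet (L1 :: permLayer π L2 :: C')) := by
  refine ⟨exists_sortingNet_permLayer π L1 L2 h1 h2 hπ1 hπ2, fun h => ?_⟩
  have hπ2' : ∀ c ∈ permLayer π L2, π.symm c.1 < π.symm c.2 := by
    intro c hc
    obtain ⟨a, ha, rfl⟩ := mem_permLayer.mp hc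
    simpa using h2.1 a ha
  simpa using exists_sortingNet_permLayer π.symm L1 (permLayer π L2) h1 (h2.permLayer hπ2)
    (permLayer_symm_of_permLayer_eq hπ1) hπ2' h

/-- Parberry: if `L1` is maximal, `π(L1) = L1` and `π(L2)` is a
layer, then a depth-d sorting network of the form `L1;L2;C` exists iff one of
the form `L1;π(L2);C'` exists. -/
theorem second_layer_permutation {n d : ℕ} (π : Equiv.Perm (Fin n))
    (L1 L2 : Layer n) (h1 : IsLayer L1) (hmax : L1.card = n / 2)
    (h2 : IsLayer L2) (hπ1 : permLayer π L1 = L1)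
    (hπ2 : ∀ c ∈ L2, π c.1 < π c.2) :
    (∃ C : Net n, (L1 :: L2 :: C).length = d ∧ IsSortingNet (L1 :: L2 :: C)) ↔
    (∃ C' : Net n, (L1 :: permLayer π L2 :: C').length = d ∧
      IsSortingNet (L1 :: permLayer π L2 :: C')) :=
  second_layer_permutation_general π L1 L2 h1 h2 hπ1 hπ2

end SN
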